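/- arXiv:2509.07598 — 2 statements merged into one kernel-verified Lean document; each statement's English description precedes it below -/
import Mathlib

section
/- For every real x > 0, Landen's identity holds: Li₂(1/(1+x)) - Li₂(-x) = π²/6 - (1/2)·ln(1+x)·ln((1+x)/x²). -/
open Real MeasureTheory

noncomputable def Li2 (x : ℝ) : ℝ := -∫ t in (0:ℝ)..x, Real.log (1 - t) / t

open intervalIntegral Set Filter Topology Asymptotics Interval

/-!
Since `Li2' y = -log (1 - y) / y`, the function
`Li2 (1 / (1 + x)) - Li2 (-x) + (1/2) log (1 + x) log ((1 + x) / x²)` has derivative zero on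
`(0, ∞)`. It is continuous from the right at `x = 0`, where its value is
`Li2 1 = ∑ 1 / n² = π² / 6`, obtained by integrating
`-log (1 - t) / t = ∑ tⁿ / (n + 1)` termwise.
-/

/- The integrand is the slope of `log (1 - ·)` at `0`, also at `t = 0` where both sides are `0`.
Its `dslope` is continuous on `(-∞, 1)`, which gives integrability away from `1`. -/
lemma log_one_sub_div_eq_slope (t : ℝ) :
    Real.log (1 - t) / t = slope (fun s => Real.log (1 - s)) 0 t := by
  simp [slope_fun_def_field]

lemma continuousOn_dslope_log_one_sub :
    ContinuousOn (dslope (fun s => Real.log (1 - s)) 0) (Iio 1) := by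
  refine (continuousOn_dslope (Iio_mem_nhds one_pos)).2 ⟨?_, ?_⟩
  · exact fun s hs => ((continuousAt_log (by linarith [mem_Iio.1 hs])).comp
      (by fun_prop)).continuousWithinAt
  · exact (differentiableAt_log (by norm_num)).comp _ (by fun_prop)

lemma intervalIntegrable_log_one_sub_div_of_lt {a b : ℝ} (ha : a < 1) (hb : b < 1) :
    IntervalIntegrable (fun t => Real.log (1 - t) / t) volume a b := by
  have hcont : ContinuousOn (dslope (fun s => Real.log (1 - s)) 0) [[a, b]] :=
    continuousOn_dslope_log_one_sub.mono fun t ht => ht.2.trans_lt (max_lt ha hb)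
  have hne : ∀ᵐ t ∂volume, t ≠ (0 : ℝ) := compl_mem_ae_iff.2 (measure_singleton 0)
  refine hcont.intervalIntegrable.congr_ae ?_
  filter_upwards [ae_restrict_of_ae hne] with t ht
  rw [dslope_of_ne _ ht, log_one_sub_div_eq_slope]

lemma intervalIntegrable_log_one_sub_div_of_pos {a b : ℝ} (ha : 0 < a) (hb : 0 < b) :
    IntervalIntegrable (fun t => Real.log (1 - t) / t) volume a b := by
  have hlog : IntervalIntegrable (fun t => Real.log (1 - t)) volume a b := by
    simpa using (intervalIntegrable_log' (a := 1 - a) (b := 1 - b)).comp_sub_left 1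
  have hinv : ContinuousOn (fun t : ℝ => t⁻¹) [[a, b]] :=
    continuousOn_inv₀.mono fun t ht => ((lt_min ha hb).trans_le ht.1).ne'
  simpa only [div_eq_mul_inv] using hlog.mul_continuousOn hinv

lemma intervalIntegrable_log_one_sub_div {a b : ℝ} (ha : a ≤ 1) (hb : b ≤ 1) :
    IntervalIntegrable (fun t => Real.log (1 - t) / t) volume a b := by
  have to_half :
      ∀ c ≤ 1, IntervalIntegrable (fun t => Real.log (1 - t) / t) volume c (1 / 2) := by
    intro c hc
    rcases hc.lt_or_eq with hc | rfl
    · exact intervalIntegrable_log_one_sub_div_of_lt hc (by norm_num)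
    · exact intervalIntegrable_log_one_sub_div_of_pos one_pos (by norm_num)
  exact (to_half a ha).trans (to_half b hb).symm

lemma continuousOn_Li2 : ContinuousOn Li2 (Iic 1) := by
  intro y (hy : y ≤ 1)
  have hIcc : [[y - 1, 1]] = Icc (y - 1) 1 := uIcc_of_le (by linarith)
  have hprim : ContinuousOn Li2 (Icc (y - 1) 1) := by
    rw [← hIcc]
    exact (continuousOn_primitive_interval'
      (intervalIntegrable_log_one_sub_div (by linarith) le_rfl)
      (by rw [hIcc]; constructor <;> linarith)).neg
  refine (hprim y ⟨by linarith, hy⟩).mono_of_mem_nhdsWithin ?_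
  exact mem_of_superset (inter_mem_nhdsWithin (Iic 1) (Ici_mem_nhds (by linarith : y - 1 < y)))
    fun t ht => ⟨ht.2, ht.1⟩

lemma hasDerivAt_Li2 {y : ℝ} (hy : y < 1) (hy0 : y ≠ 0) :
    HasDerivAt Li2 (-(Real.log (1 - y) / y)) y := by
  have hmeas : Measurable fun t => Real.log (1 - t) / t := by fun_prop
  have hcont : ContinuousAt (fun t => Real.log (1 - t) / t) y :=
    ((continuousAt_log (by linarith)).comp (by fun_prop)).div continuousAt_id hy0
  exact (integral_hasDerivAt_right (intervalIntegrable_log_one_sub_div zero_le_one hy.le)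
    hmeas.stronglyMeasurable.stronglyMeasurableAtFilter hcont).neg

lemma hasSum_pow_div_succ {t : ℝ} (ht : |t| < 1) (ht0 : t ≠ 0) :
    HasSum (fun n : ℕ => t ^ n / (n + 1)) (-Real.log (1 - t) / t) := by
  have hterm : (fun n : ℕ => t ^ n / (n + 1)) = fun n : ℕ => t ^ (n + 1) / (n + 1) / t := by
    funext n
    field_simp
    ring
  rw [hterm]
  exact (hasSum_pow_div_log_of_abs_lt_one ht).div_const t

lemma integral_pow_div_succ (n : ℕ) :
    ∫ t in (0 : ℝ)..1, t ^ n / (n + 1) = 1 / ((n : ℝ) + 1) ^ 2 := by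
  rw [intervalIntegral.integral_div, integral_pow]
  field_simp
  simp

lemma Li2_one : Li2 1 = π ^ 2 / 6 := by
  have hzeta : HasSum (fun n : ℕ => 1 / ((n : ℝ) + 1) ^ 2) (π ^ 2 / 6) := by
    simpa using (hasSum_nat_add_iff' 1).2 hasSum_zeta_two
  have hIoo : ∀ n : ℕ, ∫ t in Ioo (0 : ℝ) 1, t ^ n / (n + 1) = 1 / ((n : ℝ) + 1) ^ 2 := by
    intro n
    rw [← integral_Ioc_eq_integral_Ioo, ← integral_of_le zero_le_one, integral_pow_div_succ]
  have hint :
      ∀ n : ℕ, Integrable (fun t : ℝ => t ^ n / (n + 1)) (volume.restrict (Ioo 0 1)) :=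
    fun n => (continuous_pow n |>.div_const _).integrableOn_Icc.mono_set Ioo_subset_Icc_self
  have hnorm :
      ∀ n : ℕ, ∫ t in Ioo (0 : ℝ) 1, ‖t ^ n / (n + 1)‖ = 1 / ((n : ℝ) + 1) ^ 2 := by
    intro n
    rw [← hIoo n]
    refine setIntegral_congr_fun measurableSet_Ioo fun t ht => ?_
    exact Real.norm_of_nonneg (by have := ht.1.le; positivity)
  have hsum := hasSum_integral_of_summable_integral_norm hint
    (by simpa only [hnorm] using hzeta.summable)
  simp only [hIoo] at hsum
  rw [hzeta.unique hsum, Li2, integral_of_le zero_le_one, integral_Ioc_eq_integral_Ioo,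
    ← MeasureTheory.integral_neg]
  refine setIntegral_congr_fun measurableSet_Ioo fun t ht => ?_
  rw [← neg_div, (hasSum_pow_div_succ (abs_lt.2 ⟨by linarith [ht.1], ht.2⟩) ht.1.ne').tsum_eq]

lemma tendsto_log_one_add_mul_log_nhds_zero :
    Tendsto (fun x => Real.log (1 + x) * Real.log x) (𝓝 0) (𝓝 0) := by
  have hlog : (fun x => Real.log (1 + x)) =O[𝓝 0] fun x => x := by
    simpa using (((hasDerivAt_id (0 : ℝ)).const_add 1).log (by norm_num)).isBigO_sub
  refine (hlog.mul (isBigO_refl Real.log _)).trans_tendsto ?_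
  simpa using continuous_mul_log.tendsto 0

/- `log ((1 + x) / x²)` is expanded so that, with `log 0 = 0`, the value at `x = 0` is `Li2 1`. -/
noncomputable def landenSum (x : ℝ) : ℝ :=
  Li2 (1 / (1 + x)) - Li2 (-x) + (1 / 2) * Real.log (1 + x) ^ 2 - Real.log (1 + x) * Real.log x

lemma landenSum_zero : landenSum 0 = Li2 1 := by
  simp [landenSum, Li2]

lemma continuousWithinAt_landenSum_zero : ContinuousWithinAt landenSum (Ici 0) 0 := by
  have hA : ContinuousWithinAt (fun x => Li2 (1 / (1 + x))) (Ici 0) 0 := by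
    refine ContinuousWithinAt.comp_of_eq (f := fun x : ℝ => 1 / (1 + x))
      (continuousOn_Li2 1 (mem_Iic.2 le_rfl)) (by fun_prop (disch := norm_num)) ?_ (by norm_num)
    intro x (hx : 0 ≤ x)
    show 1 / (1 + x) ≤ 1
    exact (div_le_one (by linarith)).2 (by linarith)
  have hB : ContinuousWithinAt (fun x => Li2 (-x)) (Ici 0) 0 := by
    refine ContinuousWithinAt.comp_of_eq (f := Neg.neg)
      (continuousOn_Li2 0 (mem_Iic.2 zero_le_one)) (by fun_prop) ?_ neg_zero
    intro x (hx : 0 ≤ x)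
    exact (neg_nonpos.2 hx).trans zero_le_one
  have hC : ContinuousAt (fun x => (1 / 2) * Real.log (1 + x) ^ 2) 0 :=
    ((continuousAt_log (by norm_num)).comp (by fun_prop)).pow 2 |>.const_mul _
  have hD : ContinuousAt (fun x => Real.log (1 + x) * Real.log x) 0 := by
    simpa [ContinuousAt] using tendsto_log_one_add_mul_log_nhds_zero
  exact ((hA.sub hB).add hC.continuousWithinAt).sub hD.continuousWithinAt

lemma hasDerivAt_landenSum {x : ℝ} (hx : 0 < x) : HasDerivAt landenSum 0 x := by
  have hx1 : 0 < 1 + x := by linarith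
  have hinv : HasDerivAt (fun y => 1 / (1 + y)) (-1 / (1 + x) ^ 2) x := by
    simpa [one_div, Pi.inv_def] using ((hasDerivAt_id x).const_add 1).inv hx1.ne'
  have hlog : HasDerivAt (fun y => Real.log (1 + y)) (1 / (1 + x)) x := by
    simpa [one_div] using ((hasDerivAt_id x).const_add 1).log hx1.ne'
  have hA := (hasDerivAt_Li2 ((div_lt_one hx1).2 (by linarith)) (by positivity)).comp x hinv
  have hB := (hasDerivAt_Li2 (by linarith) (by linarith)).comp x (hasDerivAt_neg x)
  have hC := (hlog.pow 2).const_mul (1 / 2)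
  have hD := hlog.mul (hasDerivAt_log hx.ne')
  have hsub : Real.log (1 - 1 / (1 + x)) = Real.log x - Real.log (1 + x) := by
    rw [← log_div hx.ne' hx1.ne']
    congr 1
    field_simp
    ring
  refine (((hA.sub hB).add hC).sub hD).congr_deriv ?_
  rw [hsub, sub_neg_eq_add]
  field_simp
  ring

lemma landenSum_eq_Li2_one {x : ℝ} (hx : 0 < x) : landenSum x = Li2 1 := by
  have hcont : ContinuousOn landenSum (Icc 0 x) := by
    intro y hy
    rcases hy.1.eq_or_lt with rfl | hy0
    · exact continuousWithinAt_landenSum_zero.mono Icc_subset_Ici_self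
    · exact (hasDerivAt_landenSum hy0).continuousAt.continuousWithinAt
  obtain ⟨c, -, hc⟩ := exists_hasDerivAt_eq_slope landenSum (fun _ => 0) hx hcont
    fun y hy => hasDerivAt_landenSum hy.1
  rw [eq_comm, div_eq_zero_iff, sub_eq_zero] at hc
  rw [← landenSum_zero]
  exact hc.resolve_right (by linarith)

theorem landen_identity (x : ℝ) (hx : 0 < x) :
    Li2 (1 / (1 + x)) - Li2 (-x)
      = Real.pi ^ 2 / 6 - (1/2) * Real.log (1 + x) * Real.log ((1 + x) / x ^ 2) := by
  have hlog : Real.log ((1 + x) / x ^ 2) = Real.log (1 + x) - 2 * Real.log x := by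
    rw [log_div (by linarith) (by positivity), log_pow, Nat.cast_ofNat]
  have h := landenSum_eq_Li2_one hx
  rw [landenSum, Li2_one] at h
  rw [hlog]
  linarith
end

section
/- Suppose x > 1 is a real number and n > m > 0 are real numbers satisfying x^n - x^m - 1 = 0. Then Li₂(1/x^{n-m}) + Li₂(-x^m) = -(n²/2)·ln²(x). In particular, for the golden ratio φ (satisfying φ² - φ - 1 = 0), Li₂(1/φ) + Li₂(-φ) = -2·ln²(φ). -/
/-!
Landen's identity `Li₂ z + Li₂ (z / (z - 1)) = -½ log² (1 - z)` holds for all `z < 1`: both sides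
vanish at `z = 0` and have the same derivative, because `1 - z / (z - 1) = 1 / (1 - z)`. For
`z = x^m / x^n = 1 / x^(n-m)` the trinomial relation `x^n = x^m + 1` gives `1 - z = 1 / x^n` and
`z / (z - 1) = -x^m`, so the right-hand side becomes `-(n² / 2) log² x`.
-/

open Real MeasureTheory

open Set

/-- `log (1 - t) / t`, with the removable singularity at `t = 0` filled in. -/
noncomputable def dilogIntegrand : ℝ → ℝ := dslope (fun t => log (1 - t)) 0

lemma dilogIntegrand_of_ne {t : ℝ} (ht : t ≠ 0) : dilogIntegrand t = log (1 - t) / t := by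
  simp [dilogIntegrand, dslope_of_ne _ ht, slope_def_field]

lemma dilogIntegrand_zero : dilogIntegrand 0 = -1 := by
  have : HasDerivAt (fun t : ℝ => log (1 - t)) (-1) 0 := by
    simpa using ((hasDerivAt_id (0 : ℝ)).const_sub 1).log (by norm_num)
  simp [dilogIntegrand, this.deriv]

lemma continuousOn_dilogIntegrand : ContinuousOn dilogIntegrand (Iio 1) := by
  refine (continuousOn_dslope (Iio_mem_nhds one_pos)).2 ⟨?_, ?_⟩
  · exact ContinuousOn.log (by fun_prop) fun t ht => by simp only [mem_Iio] at ht; linarith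
  · exact (differentiableAt_id.const_sub 1).log (by norm_num)

lemma Li2_eq_neg_integral_dilogIntegrand (x : ℝ) :
    Li2 x = -∫ t in (0 : ℝ)..x, dilogIntegrand t := by
  refine congrArg Neg.neg (intervalIntegral.integral_congr_ae ?_)
  filter_upwards [compl_mem_ae_iff.2 (measure_singleton (μ := volume) (0 : ℝ))] with t ht _
  rw [dilogIntegrand_of_ne ht]

lemma hasDerivAt_Li2_s18 {x : ℝ} (hx : x < 1) : HasDerivAt Li2 (-dilogIntegrand x) x := by
  have hint : IntervalIntegrable dilogIntegrand volume 0 x :=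
    (continuousOn_dilogIntegrand.mono fun t ht =>
      ht.2.trans_lt (max_lt one_pos hx)).intervalIntegrable
  have hderiv := intervalIntegral.integral_hasDerivAt_right hint
    (continuousOn_dilogIntegrand.stronglyMeasurableAtFilter isOpen_Iio x hx)
    (continuousOn_dilogIntegrand.continuousAt (Iio_mem_nhds hx))
  exact hderiv.neg.congr_of_eventuallyEq (.of_forall Li2_eq_neg_integral_dilogIntegrand)

lemma Li2_zero : Li2 0 = 0 := by
  simp [Li2]

lemma div_sub_one_lt_one {z : ℝ} (hz : z < 1) : z / (z - 1) < 1 := by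
  rw [div_lt_one_of_neg (by linarith)]
  linarith

lemma hasDerivAt_landen {z : ℝ} (hz : z < 1) :
    HasDerivAt (fun z => Li2 z + Li2 (z / (z - 1)) + log (1 - z) ^ 2 / 2) 0 z := by
  have hz1 : z - 1 ≠ 0 := by linarith
  have h1z : 1 - z ≠ 0 := by linarith
  have hlog : HasDerivAt (fun z => log (1 - z)) (-1 / (1 - z)) z := by
    simpa using ((hasDerivAt_id z).const_sub 1).log h1z
  have hw : HasDerivAt (fun z => z / (z - 1)) (-1 / (z - 1) ^ 2) z := by
    refine ((hasDerivAt_id z).div ((hasDerivAt_id z).sub_const 1) hz1).congr_deriv ?_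
    simp only [id]
    ring
  refine (((hasDerivAt_Li2_s18 hz).add ((hasDerivAt_Li2_s18 (div_sub_one_lt_one hz)).comp z hw)).add
    ((hlog.pow 2).div_const 2)).congr_deriv ?_
  rcases eq_or_ne z 0 with rfl | hz0
  · simp [dilogIntegrand_zero]
  · have hlog_w : log (1 - z / (z - 1)) = -log (1 - z) := by
      rw [← log_inv]
      congr 1
      field_simp
      ring
    rw [dilogIntegrand_of_ne hz0, dilogIntegrand_of_ne (div_ne_zero hz0 hz1), hlog_w]
    field_simp
    ring

theorem Li2_add_Li2_div_sub_one {z : ℝ} (hz : z < 1) :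
    Li2 z + Li2 (z / (z - 1)) = -(log (1 - z) ^ 2 / 2) := by
  have hconst := isOpen_Iio.is_const_of_deriv_eq_zero (convex_Iio 1).isPreconnected
    (fun y hy => (hasDerivAt_landen hy).differentiableAt.differentiableWithinAt)
    (fun y hy => (hasDerivAt_landen hy).deriv) hz (mem_Iio.2 one_pos)
  simp only [Li2_zero, zero_div, zero_sub, sub_zero, log_one] at hconst
  linarith

theorem trinomial_identity_general (x n m : ℝ) (hx : 1 < x)
    (h : x ^ n - x ^ m - 1 = 0) :
    Li2 (1 / x ^ (n - m)) + Li2 (-(x ^ m)) = -(n ^ 2 / 2) * (Real.log x) ^ 2 := by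
  have hx0 : 0 < x := by linarith
  have hxn : 0 < x ^ n := rpow_pos_of_pos hx0 n
  have hz : 1 / x ^ (n - m) = x ^ m / x ^ n := by
    rw [rpow_sub hx0, one_div_div]
  have hz_lt : x ^ m / x ^ n < 1 := (div_lt_one hxn).2 (by linarith)
  have h_one_sub : 1 - x ^ m / x ^ n = (x ^ n)⁻¹ := by
    field_simp
    linarith
  have hw : x ^ m / x ^ n / (x ^ m / x ^ n - 1) = -x ^ m := by
    rw [← neg_sub, h_one_sub, div_neg, div_inv_eq_mul, div_mul_cancel₀ _ hxn.ne']
  have hlanden := Li2_add_Li2_div_sub_one hz_lt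
  rw [hw, h_one_sub, log_inv, log_rpow hx0] at hlanden
  rw [hz, hlanden]
  ring

theorem trinomial_identity (x n m : ℝ) (hx : 1 < x) (hm : 0 < m) (hmn : m < n)
    (h : x ^ n - x ^ m - 1 = 0) :
    Li2 (1 / x ^ (n - m)) + Li2 (-(x ^ m)) = -(n ^ 2 / 2) * (Real.log x) ^ 2 :=
  trinomial_identity_general x n m hx h
end
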